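/- arXiv:2303.09163 — 6 statements merged into one kernel-verified Lean document; each statement's English description precedes it below -/
import Mathlib

section
/- Fix $t > 0$ and let $\mathcal{P}(\phi)(s) = 2\max_{0\le u\le s}\phi_u - \phi_s$ be Pitman's transformation and $\mathcal{M}$ be defined by $\mathcal{M}(\phi)(s) = \phi_s - \phi_t - |\phi_t + \max_{0\le u\le s}\phi_u - \max_{s\le u\le t}\phi_u| + |\max_{0\le u\le s}\phi_u - \max_{s\le u\le t}\phi_u|$. Then for every continuous $\phi : [0,t]\to\mathbb{R}$ with $\phi_0 = 0$, $\mathcal{P}(\mathcal{M}(\phi)) = \mathcal{P}(\phi)$ on $[0,t]$. -/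
/-- The transformation `ℳ` on paths over `[0,t]`. -/
noncomputable def M (t : ℝ) (φ : ℝ → ℝ) (s : ℝ) : ℝ :=
  φ s - φ t - |φ t + sSup (φ '' Set.Icc 0 s) - sSup (φ '' Set.Icc s t)|
    + |sSup (φ '' Set.Icc 0 s) - sSup (φ '' Set.Icc s t)|

/-- Pitman's transformation. -/
noncomputable def P (φ : ℝ → ℝ) (s : ℝ) : ℝ := 2 * sSup (φ '' Set.Icc 0 s) - φ s

section helpers

variable {t : ℝ} {φ : ℝ → ℝ}

private lemma bddA (hφ : ContinuousOn φ (Set.Icc 0 t)) {a b : ℝ} (h0 : 0 ≤ a) (hbt : b ≤ t) :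
    BddAbove (φ '' Set.Icc a b) :=
  (isCompact_Icc.image_of_continuousOn (hφ.mono (Set.Icc_subset_Icc h0 hbt))).bddAbove

private lemma le_sup (hφ : ContinuousOn φ (Set.Icc 0 t)) {a b u : ℝ} (h0 : 0 ≤ a) (hbt : b ≤ t)
    (hu : u ∈ Set.Icc a b) : φ u ≤ sSup (φ '' Set.Icc a b) :=
  le_csSup (bddA hφ h0 hbt) (Set.mem_image_of_mem φ hu)

private lemma supIcc_le {a b z : ℝ} (hab : a ≤ b) (h : ∀ u ∈ Set.Icc a b, φ u ≤ z) :
    sSup (φ '' Set.Icc a b) ≤ z :=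
  csSup_le ((Set.nonempty_Icc.2 hab).image φ) (by rintro _ ⟨u, hu, rfl⟩; exact h u hu)

private lemma sup_mono (hφ : ContinuousOn φ (Set.Icc 0 t)) {a b a' b' : ℝ}
    (h0 : 0 ≤ a') (hab : a ≤ b) (ha : a' ≤ a) (hb : b ≤ b') (hbt : b' ≤ t) :
    sSup (φ '' Set.Icc a b) ≤ sSup (φ '' Set.Icc a' b') :=
  csSup_le_csSup (bddA hφ h0 hbt) ((Set.nonempty_Icc.2 hab).image φ)
    (Set.image_mono (Set.Icc_subset_Icc ha hb))

private lemma sup_split (hφ : ContinuousOn φ (Set.Icc 0 t)) {a m b : ℝ}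
    (h0 : 0 ≤ a) (ham : a ≤ m) (hmb : m ≤ b) (hbt : b ≤ t) :
    sSup (φ '' Set.Icc a b) = max (sSup (φ '' Set.Icc a m)) (sSup (φ '' Set.Icc m b)) := by
  rw [← Set.Icc_union_Icc_eq_Icc ham hmb, Set.image_union,
    csSup_union (bddA hφ h0 (hmb.trans hbt)) ((Set.nonempty_Icc.2 ham).image φ)
      (bddA hφ (h0.trans ham) hbt) ((Set.nonempty_Icc.2 hmb).image φ)]

private lemma exists_max (hφ : ContinuousOn φ (Set.Icc 0 t)) {a b : ℝ}
    (h0 : 0 ≤ a) (hab : a ≤ b) (hbt : b ≤ t) :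
    ∃ w ∈ Set.Icc a b, φ w = sSup (φ '' Set.Icc a b) := by
  obtain ⟨w, hw, hw'⟩ :=
    (isCompact_Icc.image_of_continuousOn (hφ.mono (Set.Icc_subset_Icc h0 hbt))).sSup_mem
      ((Set.nonempty_Icc.2 hab).image φ)
  exact ⟨w, hw, hw'⟩

private lemma arith_upper {p a b A B c : ℝ} (hpa : p ≤ a) (haA : a ≤ A) (hpb : p ≤ b)
    (hBb : B ≤ b) (hbmax : b ≤ max A B) (hcB : c ≤ B) (hA0 : 0 ≤ A) :
    p - c - |c + a - b| + |a - b| ≤ A + (|A - B| - |c + A - B| - c) / 2 := by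
  rcases le_total A B with h5 | h5 <;>
    [rw [max_eq_right h5] at hbmax; rw [max_eq_left h5] at hbmax] <;>
  rcases abs_cases (c + a - b) with ⟨h1, h1'⟩ | ⟨h1, h1'⟩ <;>
  rcases abs_cases (a - b) with ⟨h2, h2'⟩ | ⟨h2, h2'⟩ <;>
  rcases abs_cases (c + A - B) with ⟨h3, h3'⟩ | ⟨h3, h3'⟩ <;>
  rcases abs_cases (A - B) with ⟨h4, h4'⟩ | ⟨h4, h4'⟩ <;>
  linarith

private lemma arith_w1 {A B c : ℝ} (hc0 : 0 ≤ c) (hcB : c ≤ B) (hA0 : 0 ≤ A) :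
    A + (|A - B| - |c + A - B| - c) / 2 ≤
      min A (max A B - c) - c - |c + min A (max A B - c) - max A B|
        + |min A (max A B - c) - max A B| := by
  rcases le_total A B with h5 | h5
  · rw [max_eq_right h5]
    rcases le_total A (B - c) with h6 | h6
    · rw [min_eq_left h6]
      rcases abs_cases (c + A - B) with ⟨h3, h3'⟩ | ⟨h3, h3'⟩ <;>
      rcases abs_cases (A - B) with ⟨h4, h4'⟩ | ⟨h4, h4'⟩ <;>
      linarith
    · rw [min_eq_right h6]
      rcases abs_cases (c + A - B) with ⟨h3, h3'⟩ | ⟨h3, h3'⟩ <;>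
      rcases abs_cases (A - B) with ⟨h4, h4'⟩ | ⟨h4, h4'⟩ <;>
      rcases abs_cases (c + (B - c) - B) with ⟨h1, h1'⟩ | ⟨h1, h1'⟩ <;>
      rcases abs_cases (B - c - B) with ⟨h2, h2'⟩ | ⟨h2, h2'⟩ <;>
      linarith
  · rw [max_eq_left h5, min_eq_right (by linarith : A - c ≤ A)]
    rcases abs_cases (c + A - B) with ⟨h3, h3'⟩ | ⟨h3, h3'⟩ <;>
    rcases abs_cases (A - B) with ⟨h4, h4'⟩ | ⟨h4, h4'⟩ <;>
    rcases abs_cases (c + (A - c) - A) with ⟨h1, h1'⟩ | ⟨h1, h1'⟩ <;>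
    rcases abs_cases (A - c - A) with ⟨h2, h2'⟩ | ⟨h2, h2'⟩ <;>
    linarith

private lemma arith_w2 {A B c : ℝ} (hc0 : c < 0) (hcB : c ≤ B) (hA0 : 0 ≤ A) :
    A + (|A - B| - |c + A - B| - c) / 2 ≤
      max (min A B) (A + c) - c - |c + A - max (max (min A B) (A + c)) B|
        + |A - max (max (min A B) (A + c)) B| := by
  rcases le_total A B with h5 | h5
  · rw [min_eq_left h5]
    have hy : max A (A + c) = A := max_eq_left (by linarith)
    rw [hy]
    rw [max_eq_right h5]
    rcases abs_cases (c + A - B) with ⟨h3, h3'⟩ | ⟨h3, h3'⟩ <;>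
    rcases abs_cases (A - B) with ⟨h4, h4'⟩ | ⟨h4, h4'⟩ <;>
    linarith
  · rw [min_eq_right h5]
    rcases le_total B (A + c) with h6 | h6
    · rw [max_eq_right h6, max_eq_left (by linarith : B ≤ A + c)]
      rcases abs_cases (c + A - B) with ⟨h3, h3'⟩ | ⟨h3, h3'⟩ <;>
      rcases abs_cases (A - B) with ⟨h4, h4'⟩ | ⟨h4, h4'⟩ <;>
      rcases abs_cases (c + A - (A + c)) with ⟨h1, h1'⟩ | ⟨h1, h1'⟩ <;>
      rcases abs_cases (A - (A + c)) with ⟨h2, h2'⟩ | ⟨h2, h2'⟩ <;>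
      linarith
    · rw [max_eq_left h6, max_eq_left (le_refl B) ] 
      rcases abs_cases (c + A - B) with ⟨h3, h3'⟩ | ⟨h3, h3'⟩ <;>
      rcases abs_cases (A - B) with ⟨h4, h4'⟩ | ⟨h4, h4'⟩ <;>
      linarith

end helpers

theorem stmt5 (t : ℝ) (ht : 0 < t) (φ : ℝ → ℝ)
    (hφ : ContinuousOn φ (Set.Icc 0 t)) (hφ0 : φ 0 = 0) :
    ∀ s ∈ Set.Icc (0:ℝ) t, P (M t φ) s = P φ s := by
  intro s hs
  obtain ⟨hs0, hst⟩ := hs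
  simp only [P]
  set A := sSup (φ '' Set.Icc 0 s) with hA
  set B := sSup (φ '' Set.Icc s t) with hB
  set c := φ t with hc
  set T := A + (|A - B| - |c + A - B| - c) / 2 with hT
  have hcB : c ≤ B := le_sup hφ hs0 le_rfl ⟨hst, le_rfl⟩
  have hA0 : (0:ℝ) ≤ A := by
    have := le_sup hφ le_rfl hst ⟨le_rfl, hs0⟩
    rwa [hφ0] at this
  have hφsA : φ s ≤ A := le_sup hφ le_rfl hst ⟨hs0, le_rfl⟩
  have hφsB : φ s ≤ B := le_sup hφ hs0 le_rfl ⟨le_rfl, hst⟩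
  -- Upper bound
  have upper : ∀ u ∈ Set.Icc (0:ℝ) s, M t φ u ≤ T := by
    rintro u ⟨hu0, hus⟩
    have hut : u ≤ t := hus.trans hst
    have hpa : φ u ≤ sSup (φ '' Set.Icc 0 u) := le_sup hφ le_rfl hut ⟨hu0, le_rfl⟩
    have hpb : φ u ≤ sSup (φ '' Set.Icc u t) := le_sup hφ hu0 le_rfl ⟨le_rfl, hut⟩
    have haA : sSup (φ '' Set.Icc 0 u) ≤ A := sup_mono hφ le_rfl hu0 le_rfl hus hst
    have hBb : B ≤ sSup (φ '' Set.Icc u t) := sup_mono hφ hu0 hst hus le_rfl le_rfl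
    have hbmax : sSup (φ '' Set.Icc u t) ≤ max A B := by
      rw [sup_split hφ hu0 hus hst le_rfl]
      exact max_le_max (sup_mono hφ le_rfl hus hu0 le_rfl hst) le_rfl
    have hMu : M t φ u = φ u - c - |c + sSup (φ '' Set.Icc 0 u) - sSup (φ '' Set.Icc u t)|
        + |sSup (φ '' Set.Icc 0 u) - sSup (φ '' Set.Icc u t)| := rfl
    rw [hMu, hT]
    exact arith_upper hpa haA hpb hBb hbmax hcB hA0
  -- Lower bound : a witness achieving T
  obtain ⟨w₀, hw₀, hw₀A⟩ := exists_max hφ le_rfl hs0 hst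
  rw [← hA] at hw₀A
  have lower : ∃ v ∈ Set.Icc (0:ℝ) s, T ≤ M t φ v := by
    rcases le_or_gt 0 c with hc0 | hc0
    · -- c ≥ 0 : first hitting time of y = min A (max A B - c)
      set y := min A (max A B - c) with hy
      have hy0 : 0 ≤ y := le_min hA0 (by have := le_max_right A B; linarith)
      have hyA : y ≤ A := min_le_left _ _
      set S := Set.Icc 0 s ∩ φ ⁻¹' Set.Ici y with hS
      have hSc : IsClosed S :=
        (hφ.mono (Set.Icc_subset_Icc le_rfl hst)).preimage_isClosed_of_isClosed
          isClosed_Icc isClosed_Ici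
      have hScomp : IsCompact S := isCompact_Icc.of_isClosed_subset hSc Set.inter_subset_left
      have hw₀S : w₀ ∈ S := ⟨hw₀, by simpa [Set.mem_preimage, hw₀A] using hyA⟩
      set v := sInf S with hv
      have hvS : v ∈ S := hScomp.sInf_mem ⟨w₀, hw₀S⟩
      obtain ⟨⟨hv0, hvs⟩, hyv⟩ := hvS
      rw [Set.mem_preimage, Set.mem_Ici] at hyv
      have hvt : v ≤ t := hvs.trans hst
      have hφv : φ v = y := by
        have hivt : Set.Icc (φ 0) (φ v) ⊆ φ '' Set.Icc 0 v :=
          intermediate_value_Icc hv0 (hφ.mono (Set.Icc_subset_Icc le_rfl hvt))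
        obtain ⟨w, hw, hwy⟩ := hivt ⟨by rw [hφ0]; exact hy0, hyv⟩
        have hwS : w ∈ S := ⟨⟨hw.1, hw.2.trans hvs⟩, by simp [Set.mem_preimage, hwy]⟩
        have : w = v := le_antisymm hw.2 (csInf_le hScomp.bddBelow hwS)
        rw [← this, hwy]
      have h0v : sSup (φ '' Set.Icc 0 v) = y := by
        refine le_antisymm (supIcc_le hv0 ?_) ?_
        · intro u hu
          by_contra h
          push_neg at h
          have huS : u ∈ S := ⟨⟨hu.1, hu.2.trans hvs⟩, le_of_lt h⟩
          have h2 : u = v := le_antisymm hu.2 (csInf_le hScomp.bddBelow huS)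
          rw [h2, hφv] at h
          exact lt_irrefl _ h
        · rw [← hφv]
          exact le_sup hφ le_rfl hvt ⟨hv0, le_rfl⟩
      have hvtm : sSup (φ '' Set.Icc v t) = max A B := by
        rw [sup_split hφ hv0 hvs hst le_rfl]
        congr 1
        refine le_antisymm (sup_mono hφ le_rfl hvs hv0 le_rfl hst) ?_
        rw [← hw₀A]
        exact le_sup hφ hv0 hst ⟨csInf_le hScomp.bddBelow hw₀S, hw₀.2⟩
      refine ⟨v, ⟨hv0, hvs⟩, ?_⟩
      have hMv : M t φ v = φ v - c - |c + sSup (φ '' Set.Icc 0 v) - sSup (φ '' Set.Icc v t)|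
          + |sSup (φ '' Set.Icc 0 v) - sSup (φ '' Set.Icc v t)| := rfl
      rw [hMv, h0v, hvtm, hφv, hT]
      exact arith_w1 hc0 hcB hA0
    · -- c < 0 : last time φ ≥ y, y = max (min A B) (A + c)
      set y := max (min A B) (A + c) with hy
      have hyA : y ≤ A := max_le (min_le_left _ _) (by linarith)
      have hφsy : φ s ≤ y := le_trans (le_min hφsA hφsB) (le_max_left _ _)
      set S := Set.Icc 0 s ∩ φ ⁻¹' Set.Ici y with hS
      have hSc : IsClosed S :=
        (hφ.mono (Set.Icc_subset_Icc le_rfl hst)).preimage_isClosed_of_isClosed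
          isClosed_Icc isClosed_Ici
      have hScomp : IsCompact S := isCompact_Icc.of_isClosed_subset hSc Set.inter_subset_left
      have hw₀S : w₀ ∈ S := ⟨hw₀, by simpa [Set.mem_preimage, hw₀A] using hyA⟩
      set v := sSup S with hv
      have hvS : v ∈ S := hScomp.sSup_mem ⟨w₀, hw₀S⟩
      obtain ⟨⟨hv0, hvs⟩, hyv⟩ := hvS
      rw [Set.mem_preimage, Set.mem_Ici] at hyv
      have hvt : v ≤ t := hvs.trans hst
      have hφv : φ v = y := by
        have hivt : Set.Icc (φ s) (φ v) ⊆ φ '' Set.Icc v s :=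
          intermediate_value_Icc' hvs (hφ.mono (Set.Icc_subset_Icc hv0 hst))
        obtain ⟨w, hw, hwy⟩ := hivt ⟨hφsy, hyv⟩
        have hwS : w ∈ S := ⟨⟨hv0.trans hw.1, hw.2⟩, by simp [Set.mem_preimage, hwy]⟩
        have : w = v := le_antisymm (le_csSup hScomp.bddAbove hwS) hw.1
        rw [← this, hwy]
      have hvsy : sSup (φ '' Set.Icc v s) = y := by
        refine le_antisymm (supIcc_le hvs ?_) ?_
        · intro u hu
          by_contra h
          push_neg at h
          have huS : u ∈ S := ⟨⟨hv0.trans hu.1, hu.2⟩, le_of_lt h⟩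
          have h2 : u = v := le_antisymm (le_csSup hScomp.bddAbove huS) hu.1
          rw [h2, hφv] at h
          exact lt_irrefl _ h
        · rw [← hφv]
          exact le_sup hφ hv0 hst ⟨le_rfl, hvs⟩
      have h0v : sSup (φ '' Set.Icc 0 v) = A := by
        refine le_antisymm (sup_mono hφ le_rfl hv0 le_rfl hvs hst) ?_
        rw [← hw₀A]
        exact le_sup hφ le_rfl hvt ⟨hw₀.1, le_csSup hScomp.bddAbove hw₀S⟩
      have hvtm : sSup (φ '' Set.Icc v t) = max y B := by
        rw [sup_split hφ hv0 hvs hst le_rfl, hvsy]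
      refine ⟨v, ⟨hv0, hvs⟩, ?_⟩
      have hMv : M t φ v = φ v - c - |c + sSup (φ '' Set.Icc 0 v) - sSup (φ '' Set.Icc v t)|
          + |sSup (φ '' Set.Icc 0 v) - sSup (φ '' Set.Icc v t)| := rfl
      rw [hMv, h0v, hvtm, hφv, hT, hy]
      exact arith_w2 hc0 hcB hA0
  -- Conclusion
  obtain ⟨v, hv, hTv⟩ := lower
  have bdd : BddAbove (M t φ '' Set.Icc 0 s) := by
    refine ⟨T, ?_⟩
    rintro _ ⟨u, hu, rfl⟩
    exact upper u hu
  have key : sSup (M t φ '' Set.Icc 0 s) = T := by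
    refine le_antisymm (csSup_le ((Set.nonempty_Icc.2 hs0).image _) ?_) ?_
    · rintro _ ⟨u, hu, rfl⟩
      exact upper u hu
    · exact hTv.trans (le_csSup bdd (Set.mem_image_of_mem _ hv))
  rw [key, hT]
  have hMs : M t φ s = φ s - c - |c + A - B| + |A - B| := rfl
  rw [hMs]
  ring
end

section
/- Fix $t > 0$. The transformation $\mathcal{M}$ defined by $\mathcal{M}(\phi)(s) = \phi_s - \phi_t - |\phi_t + \max_{0\le u\le s}\phi_u - \max_{s\le u\le t}\phi_u| + |\max_{0\le u\le s}\phi_u - \max_{s\le u\le t}\phi_u|$ is an involution on paths starting at 0: for every continuous $\phi : [0,t]\to\mathbb{R}$ with $\phi_0 = 0$, $\mathcal{M}(\mathcal{M}(\phi)) = \phi$. -/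
open Set

private lemma img_bdd {f : ℝ → ℝ} {p q : ℝ} (hf : ContinuousOn f (Set.Icc p q)) :
    BddAbove (f '' Set.Icc p q) :=
  (isCompact_Icc.image_of_continuousOn hf).bddAbove

private lemma le_sSup_img {f : ℝ → ℝ} {p q u : ℝ} (hf : ContinuousOn f (Set.Icc p q))
    (hu : u ∈ Set.Icc p q) : f u ≤ sSup (f '' Set.Icc p q) :=
  le_csSup (img_bdd hf) ⟨u, hu, rfl⟩

private lemma sSup_img_le {f : ℝ → ℝ} {p q B : ℝ} (hpq : p ≤ q)
    (h : ∀ u ∈ Set.Icc p q, f u ≤ B) : sSup (f '' Set.Icc p q) ≤ B :=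
  csSup_le ((Set.nonempty_Icc.2 hpq).image f) (by rintro x ⟨u, hu, rfl⟩; exact h u hu)

private lemma sup_split_s6 {f : ℝ → ℝ} {p m q : ℝ} (hpm : p ≤ m) (hmq : m ≤ q)
    (hf : ContinuousOn f (Set.Icc p q)) :
    sSup (f '' Set.Icc p q) = max (sSup (f '' Set.Icc p m)) (sSup (f '' Set.Icc m q)) := by
  rw [← Set.Icc_union_Icc_eq_Icc hpm hmq, Set.image_union,
    csSup_union (img_bdd (hf.mono (Set.Icc_subset_Icc_right hmq)))
      ((Set.nonempty_Icc.2 hpm).image f)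
      (img_bdd (hf.mono (Set.Icc_subset_Icc_left hpm)))
      ((Set.nonempty_Icc.2 hmq).image f)]

private lemma sup_mono_s6 {f : ℝ → ℝ} {p q p' q' : ℝ} (hpq' : p' ≤ q')
    (hsub : Set.Icc p' q' ⊆ Set.Icc p q) (hf : ContinuousOn f (Set.Icc p q)) :
    sSup (f '' Set.Icc p' q') ≤ sSup (f '' Set.Icc p q) :=
  csSup_le_csSup (img_bdd hf) ((Set.nonempty_Icc.2 hpq').image f) (Set.image_mono (f := f) hsub)

private lemma exists_argmax {f : ℝ → ℝ} {p q : ℝ} (hpq : p ≤ q)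
    (hf : ContinuousOn f (Set.Icc p q)) :
    ∃ v ∈ Set.Icc p q, f v = sSup (f '' Set.Icc p q) := by
  obtain ⟨v, hv, h1, -⟩ := isCompact_Icc.exists_sSup_image_eq_and_ge
    (Set.nonempty_Icc.2 hpq) hf
  exact ⟨v, hv, h1.symm⟩

private lemma first_hit {f : ℝ → ℝ} {p q ℓ : ℝ}
    (hf : ContinuousOn f (Set.Icc p q)) (hp : f p ≤ ℓ)
    (hv : ∃ v ∈ Set.Icc p q, ℓ ≤ f v) :
    ∃ u ∈ Set.Icc p q, f u = ℓ ∧ ∀ w ∈ Set.Icc p u, f w ≤ ℓ := by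
  obtain ⟨v, hv1, hv2⟩ := hv
  have hfv : ContinuousOn f (Set.Icc p v) := hf.mono (Set.Icc_subset_Icc_right hv1.2)
  obtain ⟨w0, hw0, hw0e⟩ := intermediate_value_Icc hv1.1 hfv ⟨hp, hv2⟩
  set S : Set ℝ := Set.Icc p q ∩ f ⁻¹' {ℓ} with hS
  have hSne : S.Nonempty := ⟨w0, ⟨hw0.1, hw0.2.trans hv1.2⟩, hw0e⟩
  have hScl : IsClosed S :=
    hf.preimage_isClosed_of_isClosed isClosed_Icc (isClosed_singleton (x := ℓ))
  have hSbd : BddBelow S := ⟨p, fun x hx => hx.1.1⟩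
  have hmem := hScl.csInf_mem hSne hSbd
  refine ⟨sInf S, hmem.1, hmem.2, ?_⟩
  intro z hz
  by_contra hc
  push_neg at hc
  have hzq : z ≤ q := hz.2.trans hmem.1.2
  obtain ⟨w', hw', hw'e⟩ := intermediate_value_Icc hz.1
    (hf.mono (Set.Icc_subset_Icc le_rfl hzq)) ⟨hp, le_of_lt hc⟩
  have h1 : sInf S ≤ w' := csInf_le hSbd ⟨⟨hw'.1, hw'.2.trans hzq⟩, hw'e⟩
  have h2 : w' = z := le_antisymm hw'.2 (hz.2.trans h1)
  rw [h2] at hw'e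
  exact absurd hw'e (ne_of_gt hc)

private lemma last_hit {f : ℝ → ℝ} {p q ℓ : ℝ}
    (hf : ContinuousOn f (Set.Icc p q)) (hq : f q ≤ ℓ)
    (hv : ∃ v ∈ Set.Icc p q, ℓ ≤ f v) :
    ∃ u ∈ Set.Icc p q, f u = ℓ ∧ ∀ w ∈ Set.Icc u q, f w ≤ ℓ := by
  obtain ⟨v, hv1, hv2⟩ := hv
  have hfv : ContinuousOn f (Set.Icc v q) := hf.mono (Set.Icc_subset_Icc_left hv1.1)
  obtain ⟨w0, hw0, hw0e⟩ := intermediate_value_Icc' hv1.2 hfv ⟨hq, hv2⟩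
  set S : Set ℝ := Set.Icc p q ∩ f ⁻¹' {ℓ} with hS
  have hSne : S.Nonempty := ⟨w0, ⟨hv1.1.trans hw0.1, hw0.2⟩, hw0e⟩
  have hScl : IsClosed S :=
    hf.preimage_isClosed_of_isClosed isClosed_Icc (isClosed_singleton (x := ℓ))
  have hSbd : BddAbove S := ⟨q, fun x hx => hx.1.2⟩
  have hmem := hScl.csSup_mem hSne hSbd
  refine ⟨sSup S, hmem.1, hmem.2, ?_⟩
  intro z hz
  by_contra hc
  push_neg at hc
  have hpz : p ≤ z := hmem.1.1.trans hz.1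
  obtain ⟨w', hw', hw'e⟩ := intermediate_value_Icc' hz.2
    (hf.mono (Set.Icc_subset_Icc hpz le_rfl)) ⟨hq, le_of_lt hc⟩
  have h1 : w' ≤ sSup S := le_csSup hSbd ⟨⟨hpz.trans hw'.1, hw'.2⟩, hw'e⟩
  have h2 : w' = z := le_antisymm (h1.trans hz.1) hw'.1
  rw [h2] at hw'e
  exact absurd hw'e (ne_of_gt hc)

private lemma M_val {t : ℝ} {φ : ℝ → ℝ} {u av bv : ℝ}
    (ha : sSup (φ '' Set.Icc 0 u) = av) (hb : sSup (φ '' Set.Icc u t) = bv) :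
    M t φ u = φ u - φ t - |φ t + av - bv| + |av - bv| := by
  simp only [M, ha, hb]

private lemma psi_le {t : ℝ} {φ : ℝ → ℝ} (hφ : ContinuousOn φ (Set.Icc 0 t))
    {u : ℝ} (hu : u ∈ Set.Icc 0 t) :
    M t φ u ≤ sSup (φ '' Set.Icc 0 t) - φ t := by
  obtain ⟨h0u, hut⟩ := hu
  have hsplit := sup_split_s6 h0u hut hφ
  have hφa : φ u ≤ sSup (φ '' Set.Icc 0 u) :=
    le_sSup_img (hφ.mono (Set.Icc_subset_Icc_right hut)) ⟨h0u, le_rfl⟩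
  have hφb : φ u ≤ sSup (φ '' Set.Icc u t) :=
    le_sSup_img (hφ.mono (Set.Icc_subset_Icc_left h0u)) ⟨le_rfl, hut⟩
  rw [M_val rfl rfl]
  set au := sSup (φ '' Set.Icc 0 u)
  set bu := sSup (φ '' Set.Icc u t)
  rcases le_total (au - bu) 0 with hd | hd
  · have hbM : sSup (φ '' Set.Icc 0 t) = bu := by
      rw [hsplit]; exact max_eq_right (by linarith)
    rcases le_total (φ t + au - bu) 0 with hcd | hcd
    · rw [abs_of_nonpos hcd, abs_of_nonpos (by linarith : au - bu ≤ 0)]; linarith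
    · rw [abs_of_nonneg hcd, abs_of_nonpos (by linarith : au - bu ≤ 0)]; linarith
  · have haM : sSup (φ '' Set.Icc 0 t) = au := by
      rw [hsplit]; exact max_eq_left (by linarith)
    rcases le_total (φ t + au - bu) 0 with hcd | hcd
    · rw [abs_of_nonpos hcd, abs_of_nonneg (by linarith : (0:ℝ) ≤ au - bu)]; linarith
    · rw [abs_of_nonneg hcd, abs_of_nonneg (by linarith : (0:ℝ) ≤ au - bu)]; linarith

private lemma supA {t : ℝ} {φ : ℝ → ℝ} (hφ : ContinuousOn φ (Set.Icc 0 t))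
    (hφ0 : φ 0 = 0) {s : ℝ} (hs : s ∈ Set.Icc 0 t) :
    sSup (M t φ '' Set.Icc 0 s)
      = min (sSup (φ '' Set.Icc 0 t) + (sSup (φ '' Set.Icc 0 s) - sSup (φ '' Set.Icc s t)))
          (sSup (φ '' Set.Icc 0 t) - φ t) := by
  obtain ⟨hs0, hst⟩ := hs
  have h0t : (0:ℝ) ≤ t := hs0.trans hst
  have hφ0s : ContinuousOn φ (Set.Icc 0 s) := hφ.mono (Set.Icc_subset_Icc_right hst)
  have hφst : ContinuousOn φ (Set.Icc s t) := hφ.mono (Set.Icc_subset_Icc_left hs0)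
  set Mx := sSup (φ '' Set.Icc 0 t) with hMxe
  set as := sSup (φ '' Set.Icc 0 s) with hase
  set bs := sSup (φ '' Set.Icc s t) with hbse
  have hsplits : Mx = max as bs := sup_split_s6 hs0 hst hφ
  have hasM : as ≤ Mx := sup_mono_s6 hs0 (Set.Icc_subset_Icc_right hst) hφ
  have hbsM : bs ≤ Mx := sup_mono_s6 hst (Set.Icc_subset_Icc_left hs0) hφ
  have hMx0 : 0 ≤ Mx := by
    have := le_sSup_img hφ (Set.left_mem_Icc.2 h0t); rw [hφ0] at this; exact this
  have hcM : φ t ≤ Mx := le_sSup_img hφ (Set.right_mem_Icc.2 h0t)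
  have hφsas : φ s ≤ as := le_sSup_img hφ0s (Set.right_mem_Icc.2 hs0)
  have hφsbs : φ s ≤ bs := le_sSup_img hφst (Set.left_mem_Icc.2 hst)
  -- upper bound
  have hub : ∀ u ∈ Set.Icc 0 s, M t φ u ≤ min (Mx + (as - bs)) (Mx - φ t) := by
    intro u hu
    obtain ⟨h0u, hus⟩ := hu
    have hut : u ≤ t := hus.trans hst
    refine le_min ?_ (psi_le hφ ⟨h0u, hut⟩)
    have hsplitu : Mx = max (sSup (φ '' Set.Icc 0 u)) (sSup (φ '' Set.Icc u t)) :=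
      sup_split_s6 h0u hut hφ
    have hau : sSup (φ '' Set.Icc 0 u) ≤ as :=
      sup_mono_s6 h0u (Set.Icc_subset_Icc_right hus) hφ0s
    have hbu : bs ≤ sSup (φ '' Set.Icc u t) :=
      sup_mono_s6 hst (Set.Icc_subset_Icc_left hus) (hφ.mono (Set.Icc_subset_Icc_left h0u))
    have hbuM : sSup (φ '' Set.Icc u t) ≤ Mx :=
      sup_mono_s6 hut (Set.Icc_subset_Icc_left h0u) hφ
    have hφa : φ u ≤ sSup (φ '' Set.Icc 0 u) :=
      le_sSup_img (hφ.mono (Set.Icc_subset_Icc_right hut)) ⟨h0u, le_rfl⟩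
    have hφb : φ u ≤ sSup (φ '' Set.Icc u t) :=
      le_sSup_img (hφ.mono (Set.Icc_subset_Icc_left h0u)) ⟨le_rfl, hut⟩
    rw [M_val rfl rfl]
    set au := sSup (φ '' Set.Icc 0 u)
    set bu := sSup (φ '' Set.Icc u t)
    rcases le_total (au - bu) 0 with hd | hd
    · have hbM : Mx = bu := by rw [hsplitu]; exact max_eq_right (by linarith)
      rcases le_total (φ t + au - bu) 0 with hcd | hcd
      · rw [abs_of_nonpos hcd, abs_of_nonpos hd]; linarith
      · rw [abs_of_nonneg hcd, abs_of_nonpos hd]; linarith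
    · have haM : Mx = au := by rw [hsplitu]; exact max_eq_left (by linarith)
      rcases le_total (φ t + au - bu) 0 with hcd | hcd
      · rw [abs_of_nonpos hcd, abs_of_nonneg hd]; linarith
      · rw [abs_of_nonneg hcd, abs_of_nonneg hd]; linarith
  -- witness
  have hwit : ∃ u ∈ Set.Icc 0 s, min (Mx + (as - bs)) (Mx - φ t) ≤ M t φ u := by
    obtain ⟨v, hv, hve⟩ := exists_argmax hs0 hφ0s
    rcases le_total 0 (φ t + (as - bs)) with hcase | hcase
    · have hmin : min (Mx + (as - bs)) (Mx - φ t) = Mx - φ t :=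
        min_eq_right (by linarith)
      rcases le_total 0 (φ t) with hc | hc
      · -- c ≥ 0 : first hit of Mx - φ t on [0,s]
        have has_ge : Mx - φ t ≤ as := by
          rcases le_total as bs with h | h
          · have hh : Mx = bs := by rw [hsplits]; exact max_eq_right h
            linarith
          · have hh : Mx = as := by rw [hsplits]; exact max_eq_left h
            linarith
        obtain ⟨u, hu, hue, hub2⟩ := first_hit (ℓ := Mx - φ t) hφ0s
          (by rw [hφ0]; linarith) ⟨v, hv, by rw [hve, ← hase]; exact has_ge⟩
        have h0u : 0 ≤ u := hu.1
        have hut : u ≤ t := hu.2.trans hst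
        have hau : sSup (φ '' Set.Icc 0 u) = Mx - φ t := by
          refine le_antisymm (sSup_img_le h0u hub2) ?_
          have := le_sSup_img (hφ.mono (Set.Icc_subset_Icc_right hut))
            (Set.right_mem_Icc.2 h0u)
          rw [hue] at this; exact this
        have hsplitu : Mx = max (sSup (φ '' Set.Icc 0 u)) (sSup (φ '' Set.Icc u t)) :=
          sup_split_s6 h0u hut hφ
        have hbuM : sSup (φ '' Set.Icc u t) ≤ Mx :=
          sup_mono_s6 hut (Set.Icc_subset_Icc_left h0u) hφ
        have hφb : φ u ≤ sSup (φ '' Set.Icc u t) :=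
          le_sSup_img (hφ.mono (Set.Icc_subset_Icc_left h0u)) ⟨le_rfl, hut⟩
        have hbu : sSup (φ '' Set.Icc u t) = Mx := by
          rcases le_total (sSup (φ '' Set.Icc 0 u)) (sSup (φ '' Set.Icc u t)) with h | h
          · rw [hsplitu]; exact (max_eq_right h).symm
          · have h1 : Mx = sSup (φ '' Set.Icc 0 u) := by
              rw [hsplitu]; exact max_eq_left h
            rw [hau] at h1
            rw [hue] at hφb
            exact le_antisymm hbuM (by linarith)
        refine ⟨u, hu, ?_⟩
        rw [hmin, M_val hau hbu, hue,
          show φ t + (Mx - φ t) - Mx = 0 by ring, abs_zero,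
          show Mx - φ t - Mx = -(φ t) by ring, abs_neg, abs_of_nonneg hc]
        linarith
      · -- c ≤ 0 : last hit of Mx + φ t on [v,s]
        have hasM' : as = Mx := by
          rcases le_total as bs with h | h
          · have h1 : Mx = bs := by rw [hsplits]; exact max_eq_right h
            exact le_antisymm hasM (by linarith)
          · rw [hsplits]; exact (max_eq_left h).symm
        obtain ⟨u, hu, hue, hub2⟩ := last_hit (ℓ := Mx + φ t) (p := v) (q := s)
          (hφ0s.mono (Set.Icc_subset_Icc_left hv.1))
          (by linarith)
          ⟨v, ⟨le_rfl, hv.2⟩, by rw [hve, ← hase, hasM']; linarith⟩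
        have h0u : 0 ≤ u := hv.1.trans hu.1
        have hut : u ≤ t := hu.2.trans hst
        have hau : sSup (φ '' Set.Icc 0 u) = Mx := by
          refine le_antisymm (sup_mono_s6 h0u (Set.Icc_subset_Icc_right hut) hφ) ?_
          have := le_sSup_img (hφ.mono (Set.Icc_subset_Icc_right hut)) ⟨hv.1, hu.1⟩
          rw [hve, ← hase, hasM'] at this; exact this
        have hbu : sSup (φ '' Set.Icc u t) = Mx + φ t := by
          rw [sup_split_s6 hu.2 hst (hφ.mono (Set.Icc_subset_Icc_left h0u))]
          have h1 : sSup (φ '' Set.Icc u s) = Mx + φ t := by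
            refine le_antisymm (sSup_img_le hu.2 hub2) ?_
            have := le_sSup_img (hφ0s.mono (Set.Icc_subset_Icc_left h0u))
              (Set.left_mem_Icc.2 hu.2)
            rw [hue] at this; exact this
          rw [h1, ← hbse]
          exact max_eq_left (by linarith)
        refine ⟨u, ⟨h0u, hu.2⟩, ?_⟩
        rw [hmin, M_val hau hbu, hue,
          show φ t + Mx - (Mx + φ t) = 0 by ring, abs_zero,
          show Mx - (Mx + φ t) = -(φ t) by ring, abs_neg, abs_of_nonpos hc]
        linarith
    · rcases le_total (as - bs) 0 with hd | hd
      · -- ds ≤ 0 and c + ds ≤ 0 : witness argmax on [0,s]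
        have hbsM' : Mx = bs := by rw [hsplits]; exact max_eq_right (by linarith)
        have hmin : min (Mx + (as - bs)) (Mx - φ t) = Mx + (as - bs) :=
          min_eq_left (by linarith)
        have h0v : 0 ≤ v := hv.1
        have hvt : v ≤ t := hv.2.trans hst
        have hav : sSup (φ '' Set.Icc 0 v) = as := by
          refine le_antisymm (sup_mono_s6 h0v (Set.Icc_subset_Icc_right hv.2) hφ0s) ?_
          have := le_sSup_img (hφ.mono (Set.Icc_subset_Icc_right hvt))
            (Set.right_mem_Icc.2 h0v)
          rw [hve, ← hase] at this; exact this
        have hbv : bs ≤ sSup (φ '' Set.Icc v t) :=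
          sup_mono_s6 hst (Set.Icc_subset_Icc_left hv.2) (hφ.mono (Set.Icc_subset_Icc_left h0v))
        have hbvM : sSup (φ '' Set.Icc v t) ≤ Mx :=
          sup_mono_s6 hvt (Set.Icc_subset_Icc_left h0v) hφ
        refine ⟨v, hv, ?_⟩
        rw [hmin, M_val hav rfl, hve, ← hase]
        rw [abs_of_nonpos (by linarith : φ t + as - sSup (φ '' Set.Icc v t) ≤ 0),
          abs_of_nonpos (by linarith : as - sSup (φ '' Set.Icc v t) ≤ 0)]
        linarith
      · -- 0 ≤ ds ≤ -c : last hit of bs on [v,s]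
        have hasM' : as = Mx := by rw [hsplits]; exact (max_eq_left (by linarith)).symm
        have hmin : min (Mx + (as - bs)) (Mx - φ t) = Mx + (as - bs) :=
          min_eq_left (by linarith)
        obtain ⟨u, hu, hue, hub2⟩ := last_hit (ℓ := bs) (p := v) (q := s)
          (hφ0s.mono (Set.Icc_subset_Icc_left hv.1)) hφsbs
          ⟨v, ⟨le_rfl, hv.2⟩, by rw [hve, ← hase]; linarith⟩
        have h0u : 0 ≤ u := hv.1.trans hu.1
        have hut : u ≤ t := hu.2.trans hst
        have hau : sSup (φ '' Set.Icc 0 u) = Mx := by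
          refine le_antisymm (sup_mono_s6 h0u (Set.Icc_subset_Icc_right hut) hφ) ?_
          have := le_sSup_img (hφ.mono (Set.Icc_subset_Icc_right hut)) ⟨hv.1, hu.1⟩
          rw [hve, ← hase, hasM'] at this; exact this
        have hbu : sSup (φ '' Set.Icc u t) = bs := by
          rw [sup_split_s6 hu.2 hst (hφ.mono (Set.Icc_subset_Icc_left h0u))]
          have h1 : sSup (φ '' Set.Icc u s) = bs := by
            refine le_antisymm (sSup_img_le hu.2 hub2) ?_
            have := le_sSup_img (hφ0s.mono (Set.Icc_subset_Icc_left h0u))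
              (Set.left_mem_Icc.2 hu.2)
            rw [hue] at this; exact this
          rw [h1, ← hbse, max_self]
        refine ⟨u, ⟨h0u, hu.2⟩, ?_⟩
        rw [hmin, M_val hau hbu, hue,
          abs_of_nonpos (by linarith : φ t + Mx - bs ≤ 0),
          abs_of_nonneg (by linarith : (0:ℝ) ≤ Mx - bs)]
        linarith
  -- combine
  obtain ⟨u, hu, hule⟩ := hwit
  refine le_antisymm (sSup_img_le hs0 hub) ?_
  exact hule.trans (le_csSup ⟨min (Mx + (as - bs)) (Mx - φ t), by
    rintro x ⟨w, hw, rfl⟩; exact hub w hw⟩ ⟨u, hu, rfl⟩)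

private lemma supB {t : ℝ} {φ : ℝ → ℝ} (hφ : ContinuousOn φ (Set.Icc 0 t))
    (hφ0 : φ 0 = 0) {s : ℝ} (hs : s ∈ Set.Icc 0 t) :
    sSup (M t φ '' Set.Icc s t)
      = min (sSup (φ '' Set.Icc 0 t) - φ t)
          (sSup (φ '' Set.Icc 0 t) - (sSup (φ '' Set.Icc 0 s) - sSup (φ '' Set.Icc s t)) - 2 * φ t) := by
  obtain ⟨hs0, hst⟩ := hs
  have h0t : (0:ℝ) ≤ t := hs0.trans hst
  have hφ0s : ContinuousOn φ (Set.Icc 0 s) := hφ.mono (Set.Icc_subset_Icc_right hst)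
  have hφst : ContinuousOn φ (Set.Icc s t) := hφ.mono (Set.Icc_subset_Icc_left hs0)
  set Mx := sSup (φ '' Set.Icc 0 t) with hMxe
  set as := sSup (φ '' Set.Icc 0 s) with hase
  set bs := sSup (φ '' Set.Icc s t) with hbse
  have hsplits : Mx = max as bs := sup_split_s6 hs0 hst hφ
  have hasM : as ≤ Mx := sup_mono_s6 hs0 (Set.Icc_subset_Icc_right hst) hφ
  have hbsM : bs ≤ Mx := sup_mono_s6 hst (Set.Icc_subset_Icc_left hs0) hφ
  have hMx0 : 0 ≤ Mx := by
    have := le_sSup_img hφ (Set.left_mem_Icc.2 h0t); rw [hφ0] at this; exact this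
  have hcM : φ t ≤ Mx := le_sSup_img hφ (Set.right_mem_Icc.2 h0t)
  have hφsas : φ s ≤ as := le_sSup_img hφ0s (Set.right_mem_Icc.2 hs0)
  have hφsbs : φ s ≤ bs := le_sSup_img hφst (Set.left_mem_Icc.2 hst)
  -- upper bound
  have hub : ∀ u ∈ Set.Icc s t, M t φ u ≤ min (Mx - φ t) (Mx - (as - bs) - 2 * φ t) := by
    intro u hu
    obtain ⟨hsu, hut⟩ := hu
    have h0u : 0 ≤ u := hs0.trans hsu
    refine le_min (psi_le hφ ⟨h0u, hut⟩) ?_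
    have hsplitu : Mx = max (sSup (φ '' Set.Icc 0 u)) (sSup (φ '' Set.Icc u t)) :=
      sup_split_s6 h0u hut hφ
    have hau : as ≤ sSup (φ '' Set.Icc 0 u) :=
      sup_mono_s6 hs0 (Set.Icc_subset_Icc_right hsu) (hφ.mono (Set.Icc_subset_Icc_right hut))
    have hbu : sSup (φ '' Set.Icc u t) ≤ bs :=
      sup_mono_s6 hut (Set.Icc_subset_Icc_left hsu) hφst
    have hauM : sSup (φ '' Set.Icc 0 u) ≤ Mx :=
      sup_mono_s6 h0u (Set.Icc_subset_Icc_right hut) hφ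
    have hφa : φ u ≤ sSup (φ '' Set.Icc 0 u) :=
      le_sSup_img (hφ.mono (Set.Icc_subset_Icc_right hut)) ⟨h0u, le_rfl⟩
    have hφb : φ u ≤ sSup (φ '' Set.Icc u t) :=
      le_sSup_img (hφ.mono (Set.Icc_subset_Icc_left h0u)) ⟨le_rfl, hut⟩
    rw [M_val rfl rfl]
    set au := sSup (φ '' Set.Icc 0 u)
    set bu := sSup (φ '' Set.Icc u t)
    rcases le_total (au - bu) 0 with hd | hd
    · have hbM : Mx = bu := by rw [hsplitu]; exact max_eq_right (by linarith)
      rcases le_total (φ t + au - bu) 0 with hcd | hcd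
      · rw [abs_of_nonpos hcd, abs_of_nonpos hd]; linarith
      · rw [abs_of_nonneg hcd, abs_of_nonpos hd]; linarith
    · have haM : Mx = au := by rw [hsplitu]; exact max_eq_left (by linarith)
      rcases le_total (φ t + au - bu) 0 with hcd | hcd
      · rw [abs_of_nonpos hcd, abs_of_nonneg hd]; linarith
      · rw [abs_of_nonneg hcd, abs_of_nonneg hd]; linarith
  -- witness
  have hwit : ∃ u ∈ Set.Icc s t, min (Mx - φ t) (Mx - (as - bs) - 2 * φ t) ≤ M t φ u := by
    obtain ⟨v, hv, hve⟩ := exists_argmax hst hφst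
    have h0v : 0 ≤ v := hs0.trans hv.1
    rcases le_total 0 (φ t + (as - bs)) with hcase | hcase
    · have hmin : min (Mx - φ t) (Mx - (as - bs) - 2 * φ t) = Mx - (as - bs) - 2 * φ t :=
        min_eq_right (by linarith)
      rcases le_total 0 (as - bs) with hd | hd
      · -- ds ≥ 0 : witness argmax on [s,t]
        have hasM' : as = Mx := by rw [hsplits]; exact (max_eq_left (by linarith)).symm
        have hav : sSup (φ '' Set.Icc 0 v) = Mx := by
          refine le_antisymm (sup_mono_s6 h0v (Set.Icc_subset_Icc_right hv.2) hφ) ?_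
          have := sup_mono_s6 hs0 (Set.Icc_subset_Icc_right hv.1)
            (hφ.mono (Set.Icc_subset_Icc_right hv.2))
          rw [← hase, hasM'] at this; exact this
        have hbv : sSup (φ '' Set.Icc v t) = bs := by
          refine le_antisymm (sup_mono_s6 hv.2 (Set.Icc_subset_Icc_left hv.1) hφst) ?_
          have := le_sSup_img (hφ.mono (Set.Icc_subset_Icc_left h0v))
            (Set.left_mem_Icc.2 hv.2)
          rw [hve, ← hbse] at this; exact this
        refine ⟨v, hv, ?_⟩
        rw [hmin, M_val hav hbv, hve, ← hbse,
          abs_of_nonneg (by linarith : (0:ℝ) ≤ φ t + Mx - bs),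
          abs_of_nonneg (by linarith : (0:ℝ) ≤ Mx - bs)]
        linarith
      · -- ds ≤ 0 (so φ t ≥ 0) : first hit of as on [s,v]
        have hbsM' : Mx = bs := by rw [hsplits]; exact max_eq_right (by linarith)
        obtain ⟨u, hu, hue, hub2⟩ := first_hit (ℓ := as) (p := s) (q := v)
          (hφst.mono (Set.Icc_subset_Icc_right hv.2)) hφsas
          ⟨v, ⟨hv.1, le_rfl⟩, by rw [hve, ← hbse]; linarith⟩
        have h0u : 0 ≤ u := hs0.trans hu.1
        have hut : u ≤ t := hu.2.trans hv.2
        have hau : sSup (φ '' Set.Icc 0 u) = as := by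
          rw [sup_split_s6 hs0 hu.1 (hφ.mono (Set.Icc_subset_Icc_right hut))]
          have h1 : sSup (φ '' Set.Icc s u) = as := by
            refine le_antisymm (sSup_img_le hu.1 hub2) ?_
            have := le_sSup_img (p := s) (q := u) (hφ.mono (Set.Icc_subset_Icc hs0 hut))
              (Set.right_mem_Icc.2 hu.1)
            rw [hue] at this; exact this
          rw [h1, ← hase, max_self]
        have hbu : sSup (φ '' Set.Icc u t) = Mx := by
          refine le_antisymm (sup_mono_s6 hut (Set.Icc_subset_Icc_left h0u) hφ) ?_
          have := le_sSup_img (hφ.mono (Set.Icc_subset_Icc_left h0u)) ⟨hu.2, hv.2⟩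
          rw [hve, ← hbse, ← hbsM'] at this; exact this
        refine ⟨u, ⟨hu.1, hut⟩, ?_⟩
        rw [hmin, M_val hau hbu, hue,
          abs_of_nonneg (by linarith : (0:ℝ) ≤ φ t + as - Mx),
          abs_of_nonpos (by linarith : as - Mx ≤ 0)]
        linarith
    · have hmin : min (Mx - φ t) (Mx - (as - bs) - 2 * φ t) = Mx - φ t :=
        min_eq_left (by linarith)
      rcases le_total 0 (φ t) with hc | hc
      · -- c ≥ 0 : first hit of Mx - φ t on [s,v]
        have hbsM' : Mx = bs := by rw [hsplits]; exact max_eq_right (by linarith)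
        obtain ⟨u, hu, hue, hub2⟩ := first_hit (ℓ := Mx - φ t) (p := s) (q := v)
          (hφst.mono (Set.Icc_subset_Icc_right hv.2)) (by linarith)
          ⟨v, ⟨hv.1, le_rfl⟩, by rw [hve, ← hbse]; linarith⟩
        have h0u : 0 ≤ u := hs0.trans hu.1
        have hut : u ≤ t := hu.2.trans hv.2
        have hau : sSup (φ '' Set.Icc 0 u) = Mx - φ t := by
          rw [sup_split_s6 hs0 hu.1 (hφ.mono (Set.Icc_subset_Icc_right hut))]
          have h1 : sSup (φ '' Set.Icc s u) = Mx - φ t := by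
            refine le_antisymm (sSup_img_le hu.1 hub2) ?_
            have := le_sSup_img (p := s) (q := u) (hφ.mono (Set.Icc_subset_Icc hs0 hut))
              (Set.right_mem_Icc.2 hu.1)
            rw [hue] at this; exact this
          rw [h1, ← hase]
          exact max_eq_right (by linarith)
        have hbu : sSup (φ '' Set.Icc u t) = Mx := by
          refine le_antisymm (sup_mono_s6 hut (Set.Icc_subset_Icc_left h0u) hφ) ?_
          have := le_sSup_img (hφ.mono (Set.Icc_subset_Icc_left h0u)) ⟨hu.2, hv.2⟩
          rw [hve, ← hbse, ← hbsM'] at this; exact this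
        refine ⟨u, ⟨hu.1, hut⟩, ?_⟩
        rw [hmin, M_val hau hbu, hue,
          show φ t + (Mx - φ t) - Mx = 0 by ring, abs_zero,
          show Mx - φ t - Mx = -(φ t) by ring, abs_neg, abs_of_nonneg hc]
        linarith
      · -- c ≤ 0 : last hit of Mx + φ t on [v,t]
        have hbs_ge : Mx + φ t ≤ bs := by
          rcases le_total as bs with h | h
          · have h1 : Mx = bs := by rw [hsplits]; exact max_eq_right h
            linarith
          · have h1 : Mx = as := by rw [hsplits]; exact max_eq_left h
            linarith
        obtain ⟨u, hu, hue, hub2⟩ := last_hit (ℓ := Mx + φ t) (p := v) (q := t)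
          (hφ.mono (Set.Icc_subset_Icc_left h0v)) (by linarith)
          ⟨v, ⟨le_rfl, hv.2⟩, by rw [hve, ← hbse]; linarith⟩
        have h0u : 0 ≤ u := h0v.trans hu.1
        have hsu : s ≤ u := hv.1.trans hu.1
        have hau : sSup (φ '' Set.Icc 0 u) = Mx := by
          refine le_antisymm (sup_mono_s6 h0u (Set.Icc_subset_Icc_right hu.2) hφ) ?_
          have h1 : bs ≤ sSup (φ '' Set.Icc 0 u) := by
            have := le_sSup_img (hφ.mono (Set.Icc_subset_Icc_right hu.2)) ⟨h0v, hu.1⟩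
            rw [hve, ← hbse] at this; exact this
          have h2 : as ≤ sSup (φ '' Set.Icc 0 u) :=
            sup_mono_s6 hs0 (Set.Icc_subset_Icc_right hsu)
              (hφ.mono (Set.Icc_subset_Icc_right hu.2))
          rw [hsplits]; exact max_le h2 h1
        have hbu : sSup (φ '' Set.Icc u t) = Mx + φ t := by
          refine le_antisymm (sSup_img_le hu.2 hub2) ?_
          have := le_sSup_img (hφ.mono (Set.Icc_subset_Icc_left h0u))
            (Set.left_mem_Icc.2 hu.2)
          rw [hue] at this; exact this
        refine ⟨u, ⟨hsu, hu.2⟩, ?_⟩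
        rw [hmin, M_val hau hbu, hue,
          show φ t + Mx - (Mx + φ t) = 0 by ring, abs_zero,
          show Mx - (Mx + φ t) = -(φ t) by ring, abs_neg, abs_of_nonpos hc]
        linarith
  -- combine
  obtain ⟨u, hu, hule⟩ := hwit
  refine le_antisymm (sSup_img_le hst hub) ?_
  exact hule.trans (le_csSup ⟨min (Mx - φ t) (Mx - (as - bs) - 2 * φ t), by
    rintro x ⟨w, hw, rfl⟩; exact hub w hw⟩ ⟨u, hu, rfl⟩)

theorem stmt6 (t : ℝ) (ht : 0 < t) (φ : ℝ → ℝ)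
    (hφ : ContinuousOn φ (Set.Icc 0 t)) (hφ0 : φ 0 = 0) :
    ∀ s ∈ Set.Icc (0:ℝ) t, M t (M t φ) s = φ s := by
  intro s hs
  have h0t : (0:ℝ) ≤ t := le_of_lt ht
  have hMx0 : 0 ≤ sSup (φ '' Set.Icc 0 t) := by
    have := le_sSup_img hφ (Set.left_mem_Icc.2 h0t); rw [hφ0] at this; exact this
  have hcM : φ t ≤ sSup (φ '' Set.Icc 0 t) := le_sSup_img hφ (Set.right_mem_Icc.2 h0t)
  have hbt : sSup (φ '' Set.Icc t t) = φ t := by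
    rw [Set.Icc_self, Set.image_singleton, csSup_singleton]
  have hpsit : M t φ t = -φ t := by
    rw [M_val rfl hbt,
      show φ t + sSup (φ '' Set.Icc 0 t) - φ t = sSup (φ '' Set.Icc 0 t) by ring,
      abs_of_nonneg hMx0, abs_of_nonneg (by linarith : (0:ℝ) ≤ sSup (φ '' Set.Icc 0 t) - φ t)]
    ring
  rw [M_val (supA hφ hφ0 hs) (supB hφ hφ0 hs), hpsit, M_val (u := s) rfl rfl]
  set Mx := sSup (φ '' Set.Icc 0 t) with hMxe
  set as := sSup (φ '' Set.Icc 0 s) with hase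
  set bs := sSup (φ '' Set.Icc s t) with hbse
  rcases le_total 0 (φ t + (as - bs)) with hc | hc
  · rw [min_eq_right (by linarith : Mx - φ t ≤ Mx + (as - bs)),
      min_eq_right (by linarith : Mx - (as - bs) - 2 * φ t ≤ Mx - φ t),
      show -φ t + (Mx - φ t) - (Mx - (as - bs) - 2 * φ t) = as - bs by ring,
      show Mx - φ t - (Mx - (as - bs) - 2 * φ t) = φ t + as - bs by ring]
    ring
  · rw [min_eq_left (by linarith : Mx + (as - bs) ≤ Mx - φ t),
      min_eq_left (by linarith : Mx - φ t ≤ Mx - (as - bs) - 2 * φ t),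
      show -φ t + (Mx + (as - bs)) - (Mx - φ t) = as - bs by ring,
      show Mx + (as - bs) - (Mx - φ t) = φ t + as - bs by ring]
    ring
end

section
/- Fix $t > 0$ and let $R(\phi)(s) = \phi_{t-s} - \phi_t$ be the time-reversal operator. For every continuous $\phi : [0,t]\to\mathbb{R}$ with $\phi_0 = 0$, the transformation $\mathcal{M}$ commutes with $R$: $R(\mathcal{M}(\phi)) = \mathcal{M}(R(\phi))$. -/
/-- The time-reversal operator on paths over `[0,t]`. -/
noncomputable def R (t : ℝ) (φ : ℝ → ℝ) (s : ℝ) : ℝ := φ (t - s) - φ t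

lemma sSup_sub_const (S : Set ℝ) (c : ℝ) (hne : S.Nonempty) (hbdd : BddAbove S) :
    sSup ((fun x => x - c) '' S) = sSup S - c := by
  have := (OrderIso.subRight c).map_csSup' hne hbdd
  simpa using this.symm

theorem stmt7 (t : ℝ) (ht : 0 < t) (φ : ℝ → ℝ)
    (hφ : ContinuousOn φ (Set.Icc 0 t)) (hφ0 : φ 0 = 0) :
    ∀ s ∈ Set.Icc (0:ℝ) t, R t (M t φ) s = M t (R t φ) s := by
  intro s hs
  obtain ⟨hs0, hst⟩ := hs
  have hts0 : (0:ℝ) ≤ t - s := by linarith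
  have htst : t - s ≤ t := by linarith
  -- basic bddAbove / nonempty facts
  have hsub1 : Set.Icc (t - s) t ⊆ Set.Icc 0 t := Set.Icc_subset_Icc hts0 le_rfl
  have hsub2 : Set.Icc (0:ℝ) (t - s) ⊆ Set.Icc 0 t := Set.Icc_subset_Icc le_rfl htst
  have hbdd : BddAbove (φ '' Set.Icc 0 t) :=
    (isCompact_Icc.image_of_continuousOn hφ).bddAbove
  have hbdd1 : BddAbove (φ '' Set.Icc (t - s) t) := hbdd.mono (Set.image_mono hsub1)
  have hbdd2 : BddAbove (φ '' Set.Icc 0 (t - s)) := hbdd.mono (Set.image_mono hsub2)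
  have hne1 : (φ '' Set.Icc (t - s) t).Nonempty :=
    (Set.nonempty_Icc.2 htst).image _
  have hne2 : (φ '' Set.Icc (0:ℝ) (t - s)).Nonempty :=
    (Set.nonempty_Icc.2 hts0).image _
  -- images of R
  have hR : R t φ = (fun x => x - φ t) ∘ φ ∘ (fun u => t - u) := rfl
  have himg1 : R t φ '' Set.Icc 0 s = (fun x => x - φ t) '' (φ '' Set.Icc (t - s) t) := by
    rw [hR, Set.image_comp, Set.image_comp, Set.image_const_sub_Icc, sub_zero]
  have himg2 : R t φ '' Set.Icc s t = (fun x => x - φ t) '' (φ '' Set.Icc 0 (t - s)) := by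
    rw [hR, Set.image_comp, Set.image_comp, Set.image_const_sub_Icc, sub_self]
  have hS1 : sSup (R t φ '' Set.Icc 0 s) = sSup (φ '' Set.Icc (t - s) t) - φ t := by
    rw [himg1, sSup_sub_const _ _ hne1 hbdd1]
  have hS2 : sSup (R t φ '' Set.Icc s t) = sSup (φ '' Set.Icc 0 (t - s)) - φ t := by
    rw [himg2, sSup_sub_const _ _ hne2 hbdd2]
  -- the global sup C
  set C := sSup (φ '' Set.Icc 0 t) with hC
  have hC0 : 0 ≤ C := by
    have : φ 0 ∈ φ '' Set.Icc 0 t := ⟨0, ⟨le_rfl, le_of_lt ht⟩, rfl⟩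
    have := le_csSup hbdd this
    linarith [hφ0 ▸ this]
  have hCt : φ t ≤ C := le_csSup hbdd ⟨t, ⟨le_of_lt ht, le_rfl⟩, rfl⟩
  have hMt : M t φ t = -|C| + |C - φ t| := by
    simp [M, hC]
  set a := sSup (φ '' Set.Icc (t - s) t) with ha
  set b := sSup (φ '' Set.Icc 0 (t - s)) with hb
  have habs1 : |C| = C := abs_of_nonneg hC0
  have habs2 : |C - φ t| = C - φ t := abs_of_nonneg (by linarith)
  show M t φ (t - s) - M t φ t = _
  rw [hMt]
  simp only [M]
  rw [hS1, hS2]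
  simp only [R, sub_self, hφ0, ← ha, ← hb, habs1, habs2]
  have e1 : (0 - φ t + (a - φ t) - (b - φ t)) = -(φ t + b - a) := by ring
  have e2 : (a - φ t - (b - φ t)) = -(b - a) := by ring
  rw [e1, e2, abs_neg, abs_neg]
  ring
end

section
/- Fix $t > 0$. For every continuous $\phi : [0,t]\to\mathbb{R}$ with $\phi_0 = 0$ and every $s \in [0,t]$, it holds that $2\max_{s\le u\le t}\mathcal{M}(\phi)(u) - \mathcal{M}(\phi)(s) = 2\max_{s\le u\le t}\phi_u - \phi_s - 2\phi_t$. -/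
open Set

section Aux

variable {ψ : ℝ → ℝ}

lemma habs (a b : ℝ) : |a - b| = 2 * max a b - a - b := by
  rcases le_total a b with h | h
  · rw [abs_of_nonpos (by linarith), max_eq_right h]; ring
  · rw [abs_of_nonneg (by linarith), max_eq_left h]; ring

lemma hbdd (hψ : Continuous ψ) (a b : ℝ) : BddAbove (ψ '' Icc a b) :=
  (isCompact_Icc.image hψ).bddAbove

lemma hle (hψ : Continuous ψ) {a b x : ℝ} (hx : x ∈ Icc a b) :
    ψ x ≤ sSup (ψ '' Icc a b) :=
  le_csSup (hbdd hψ a b) (mem_image_of_mem _ hx)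

lemma hsplit (hψ : Continuous ψ) {a b c : ℝ} (hab : a ≤ b) (hbc : b ≤ c) :
    sSup (ψ '' Icc a c) = max (sSup (ψ '' Icc a b)) (sSup (ψ '' Icc b c)) := by
  rw [← Icc_union_Icc_eq_Icc hab hbc, image_union,
    csSup_union (hbdd hψ a b) ((nonempty_Icc.2 hab).image ψ)
      (hbdd hψ b c) ((nonempty_Icc.2 hbc).image ψ)]

lemma hmono (hψ : Continuous ψ) {a b c d : ℝ} (hac : c ≤ a) (hbd : b ≤ d)
    (hab : a ≤ b) : sSup (ψ '' Icc a b) ≤ sSup (ψ '' Icc c d) :=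
  csSup_le_csSup (hbdd hψ c d) ((nonempty_Icc.2 hab).image ψ)
    (image_mono (Icc_subset_Icc hac hbd))

lemma hexists (hψ : Continuous ψ) {a b : ℝ} (hab : a ≤ b) :
    ∃ x ∈ Icc a b, ψ x = sSup (ψ '' Icc a b) := by
  obtain ⟨x, hx, h⟩ := isCompact_Icc.exists_sSup_image_eq (nonempty_Icc.2 hab)
    hψ.continuousOn
  exact ⟨x, hx, h.symm⟩

lemma hAcont (hψ : Continuous ψ) (c d : ℝ) :
    ContinuousOn (fun u => sSup (ψ '' Icc c u)) (Icc c d) := by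
  have hF : Continuous fun u => sSup ((fun v => ψ (min v u)) '' Icc c d) := by
    apply isCompact_Icc.continuous_sSup
    exact hψ.comp (continuous_snd.min continuous_fst)
  apply hF.continuousOn.congr
  intro u hu
  dsimp only
  congr 1
  apply Subset.antisymm
  · rintro y ⟨x, hx, rfl⟩
    exact ⟨x, ⟨hx.1, hx.2.trans hu.2⟩, by dsimp only; rw [min_eq_left hx.2]⟩
  · rintro y ⟨x, hx, rfl⟩
    exact ⟨min x u, ⟨le_min hx.1 hu.1, min_le_right _ _⟩, rfl⟩

lemma hBcont (hψ : Continuous ψ) (c d : ℝ) :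
    ContinuousOn (fun u => sSup (ψ '' Icc u d)) (Icc c d) := by
  have hF : Continuous fun u => sSup ((fun v => ψ (max v u)) '' Icc c d) := by
    apply isCompact_Icc.continuous_sSup
    exact hψ.comp (continuous_snd.max continuous_fst)
  apply hF.continuousOn.congr
  intro u hu
  dsimp only
  congr 1
  apply Subset.antisymm
  · rintro y ⟨x, hx, rfl⟩
    exact ⟨x, ⟨hu.1.trans hx.1, hx.2⟩, by dsimp only; rw [max_eq_left hx.1]⟩
  · rintro y ⟨x, hx, rfl⟩
    exact ⟨max x u, ⟨le_max_right _ _, max_le hx.2 hu.2⟩, rfl⟩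

/-- `M` rewritten with maxima. -/
lemma hMeq (hψ : Continuous ψ) {t u : ℝ} (hu : u ∈ Icc 0 t) :
    M t ψ u = ψ u + 2 * sSup (ψ '' Icc 0 t)
      - 2 * max (ψ t + sSup (ψ '' Icc 0 u)) (sSup (ψ '' Icc u t)) := by
  have hC : sSup (ψ '' Icc 0 t) = max (sSup (ψ '' Icc 0 u)) (sSup (ψ '' Icc u t)) :=
    hsplit hψ hu.1 hu.2
  unfold M
  rw [habs (ψ t + sSup (ψ '' Icc 0 u)) (sSup (ψ '' Icc u t)),
    habs (sSup (ψ '' Icc 0 u)) (sSup (ψ '' Icc u t)), ← hC]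
  ring

theorem master (t : ℝ) (ht : 0 < t) (ψ : ℝ → ℝ)
    (hψ : Continuous ψ) (hψ0 : ψ 0 = 0) :
    ∀ s ∈ Set.Icc (0:ℝ) t,
      2 * sSup ((M t ψ) '' Set.Icc s t) - M t ψ s
        = 2 * sSup (ψ '' Set.Icc s t) - ψ s - 2 * ψ t := by
  intro s hs
  obtain ⟨hs0, hst⟩ := hs
  set A : ℝ → ℝ := fun u => sSup (ψ '' Icc 0 u) with hA
  set B : ℝ → ℝ := fun u => sSup (ψ '' Icc u t) with hB
  set C : ℝ := sSup (ψ '' Icc 0 t) with hC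
  have hmaxC : ∀ u ∈ Icc (0:ℝ) t, max (A u) (B u) = C := fun u hu =>
    (hsplit hψ hu.1 hu.2).symm
  have hC0 : 0 ≤ C := hψ0 ▸ hle hψ ⟨le_refl 0, ht.le⟩
  have hBt : B t = ψ t := by rw [hB]; simp [Icc_self]
  -- upper bound
  have hub : ∀ u ∈ Icc s t,
      M t ψ u ≤ B s + C - ψ t - max (ψ t + A s) (B s) := by
    intro u hu
    have hu0t : u ∈ Icc (0:ℝ) t := ⟨hs0.trans hu.1, hu.2⟩
    rw [hMeq hψ hu0t]
    have hψAu : ψ u ≤ A u := hle hψ ⟨hu0t.1, le_refl u⟩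
    have hψBu : ψ u ≤ B u := hle hψ ⟨le_refl u, hu0t.2⟩
    have hAsu : A s ≤ A u := hmono hψ (le_refl 0) hu.1 hs0
    have hBus : B u ≤ B s := hmono hψ hu.1 (le_refl t) hu0t.2
    have e1 : ψ t + A u ≤ max (ψ t + A u) (B u) := le_max_left _ _
    have e2 : B u ≤ max (ψ t + A u) (B u) := le_max_right _ _
    have hCu := hmaxC u hu0t
    have hCs := hmaxC s ⟨hs0, hst⟩
    have hii : C + ψ u + ψ t ≤ 2 * max (ψ t + A u) (B u) := by
      rcases le_total (A u) (B u) with h | h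
      · rw [max_eq_right h] at hCu; linarith
      · rw [max_eq_left h] at hCu; linarith
    have hi : 2 * ψ t + A s + C + ψ u ≤ B s + 2 * max (ψ t + A u) (B u) := by
      rcases le_total (A s) (B s) with h | h
      · rw [max_eq_right h] at hCs; linarith
      · rw [max_eq_left h] at hCs; linarith
    have hY : max (ψ t + A s) (B s)
        ≤ B s - C - ψ t - ψ u + 2 * max (ψ t + A u) (B u) :=
      max_le (by linarith) (by linarith)
    linarith
  -- witness
  have hwit : ∀ v ∈ Icc s t, B v ≤ ψ t + A v →
      ∃ r ∈ Icc s t, M t ψ r = B v - A v + C - 2 * ψ t := by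
    intro v hv hBA
    have hv0t : v ∈ Icc (0:ℝ) t := ⟨hs0.trans hv.1, hv.2⟩
    obtain ⟨u₁, hu₁, hψu₁⟩ := hexists hψ hv.2
    have hψu₁' : ψ u₁ = B v := hψu₁
    set m : ℝ := min (A v) (B v) with hm
    have hψv_le : ψ v ≤ m :=
      le_min (hle hψ ⟨hv0t.1, le_refl v⟩) (hle hψ ⟨le_refl v, hv0t.2⟩)
    have hm_le : m ≤ ψ u₁ := by rw [hψu₁']; exact min_le_right _ _
    set S : Set ℝ := Icc v u₁ ∩ ψ ⁻¹' {m} with hS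
    have hSne : S.Nonempty := by
      obtain ⟨z, hz, hzm⟩ := intermediate_value_Icc hu₁.1 hψ.continuousOn
        ⟨hψv_le, hm_le⟩
      exact ⟨z, hz, hzm⟩
    have hSclosed : IsClosed S := isClosed_Icc.inter (isClosed_singleton.preimage hψ)
    have hSbdd : BddBelow S := ⟨v, fun x hx => hx.1.1⟩
    set r : ℝ := sInf S with hr
    have hrS : r ∈ S := hSclosed.csInf_mem hSne hSbdd
    have hψr : ψ r = m := hrS.2
    have hrIcc : r ∈ Icc v u₁ := hrS.1
    have hrt : r ≤ t := hrIcc.2.trans hu₁.2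
    have hkey : ∀ x ∈ Icc v r, ψ x ≤ m := by
      intro x hx
      by_contra hlt
      push_neg at hlt
      obtain ⟨z, hz, hzm⟩ := intermediate_value_Icc hx.1 hψ.continuousOn
        ⟨hψv_le, hlt.le⟩
      have hzS : z ∈ S := ⟨⟨hz.1, hz.2.trans (hx.2.trans hrIcc.2)⟩, hzm⟩
      have hrz : r ≤ z := csInf_le hSbdd hzS
      have hxr : x = r := le_antisymm hx.2 (hrz.trans hz.2)
      rw [hxr, hψr] at hlt
      exact lt_irrefl _ hlt
    have hAr : A r = A v := by
      have h1 : A r = max (A v) (sSup (ψ '' Icc v r)) := hsplit hψ hv0t.1 hrIcc.1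
      have h2 : sSup (ψ '' Icc v r) ≤ A v := by
        apply csSup_le ((nonempty_Icc.2 hrIcc.1).image ψ)
        rintro y ⟨x, hx, rfl⟩
        exact (hkey x hx).trans (min_le_left _ _)
      rw [h1, max_eq_left h2]
    have hBr : B r ≤ B v := hmono hψ hrIcc.1 (le_refl t) hrt
    refine ⟨r, ⟨hv.1.trans hrIcc.1, hrt⟩, ?_⟩
    rw [hMeq hψ ⟨hv0t.1.trans hrIcc.1, hrt⟩]
    rw [show sSup (ψ '' Icc 0 r) = A r from rfl, show sSup (ψ '' Icc r t) = B r from rfl,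
      show sSup (ψ '' Icc 0 t) = C from rfl, hψr, hAr,
      max_eq_left (hBr.trans hBA)]
    have hCv := hmaxC v hv0t
    rcases le_total (A v) (B v) with h | h
    · rw [max_eq_right h] at hCv; rw [hm, min_eq_left h]; linarith
    · rw [max_eq_left h] at hCv; rw [hm, min_eq_right h]; linarith
  -- main split
  have hMs : M t ψ s = ψ s + 2 * C - 2 * max (ψ t + A s) (B s) := hMeq hψ ⟨hs0, hst⟩
  have hBs : sSup (ψ '' Icc s t) = B s := rfl
  rcases le_total (ψ t + A s) (B s) with hcase | hcase
  · -- case I: find a crossing point by IVT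
    have hg : ContinuousOn (fun u => ψ t + A u - B u) (Icc s t) := by
      apply ContinuousOn.sub
      · exact continuousOn_const.add
          (((hAcont hψ 0 t).mono (Icc_subset_Icc_left hs0)))
      · exact (hBcont hψ 0 t).mono (Icc_subset_Icc_left hs0)
    have h0mem : (0:ℝ) ∈ Icc (ψ t + A s - B s) (ψ t + A t - B t) := by
      constructor
      · linarith
      · rw [hBt]
        have : A t = C := rfl
        linarith
    obtain ⟨v, hv, hgv⟩ := intermediate_value_Icc hst hg h0mem
    obtain ⟨r, hrmem, hMr⟩ := hwit v hv (by simp only at hgv; linarith)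
    have hBAv : B v - A v = ψ t := by simp only at hgv; linarith
    have hmax : max (ψ t + A s) (B s) = B s := max_eq_right hcase
    have hMrval : M t ψ r = B s + C - ψ t - max (ψ t + A s) (B s) := by
      rw [hmax, hMr]; linarith
    have hsup : sSup (M t ψ '' Icc s t) = B s + C - ψ t - max (ψ t + A s) (B s) := by
      apply le_antisymm
      · apply csSup_le ((nonempty_Icc.2 hst).image _)
        rintro y ⟨u, hu, rfl⟩
        exact hub u hu
      · rw [← hMrval]
        exact le_csSup ⟨B s + C - ψ t - max (ψ t + A s) (B s),
          fun y ⟨u, hu, hy⟩ => hy ▸ hub u hu⟩ (mem_image_of_mem _ hrmem)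
    rw [hsup, hMs, hBs]
    ring
  · -- case II: v = s
    obtain ⟨r, hrmem, hMr⟩ := hwit s ⟨le_refl s, hst⟩ hcase
    have hmax : max (ψ t + A s) (B s) = ψ t + A s := max_eq_left hcase
    have hMrval : M t ψ r = B s + C - ψ t - max (ψ t + A s) (B s) := by
      rw [hmax, hMr]; ring
    have hsup : sSup (M t ψ '' Icc s t) = B s + C - ψ t - max (ψ t + A s) (B s) := by
      apply le_antisymm
      · apply csSup_le ((nonempty_Icc.2 hst).image _)
        rintro y ⟨u, hu, rfl⟩
        exact hub u hu
      · rw [← hMrval]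
        exact le_csSup ⟨B s + C - ψ t - max (ψ t + A s) (B s),
          fun y ⟨u, hu, hy⟩ => hy ▸ hub u hu⟩ (mem_image_of_mem _ hrmem)
    rw [hsup, hMs, hBs]
    ring

end Aux

theorem stmt8 (t : ℝ) (ht : 0 < t) (φ : ℝ → ℝ)
    (hφ : ContinuousOn φ (Set.Icc 0 t)) (hφ0 : φ 0 = 0) :
    ∀ s ∈ Set.Icc (0:ℝ) t,
      2 * sSup ((M t φ) '' Set.Icc s t) - M t φ s
        = 2 * sSup (φ '' Set.Icc s t) - φ s - 2 * φ t := by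
  intro s hs
  set ψ : ℝ → ℝ := IccExtend ht.le ((Icc (0:ℝ) t).restrict φ) with hψdef
  have hψ : Continuous ψ := (continuousOn_iff_continuous_restrict.mp hφ).Icc_extend'
  have heq : ∀ x ∈ Icc (0:ℝ) t, ψ x = φ x := fun x hx => by
    rw [hψdef, IccExtend_of_mem _ _ hx]; rfl
  have hψ0 : ψ 0 = 0 := by rw [heq 0 ⟨le_refl 0, ht.le⟩, hφ0]
  have him : ∀ a b : ℝ, 0 ≤ a → b ≤ t → ψ '' Icc a b = φ '' Icc a b := by
    intro a b ha hb
    apply image_congr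
    intro x hx
    exact heq x ⟨ha.trans hx.1, hx.2.trans hb⟩
  have hMeqn : ∀ u ∈ Icc s t, M t ψ u = M t φ u := by
    intro u hu
    have hu0t : u ∈ Icc (0:ℝ) t := ⟨hs.1.trans hu.1, hu.2⟩
    unfold M
    rw [him 0 u (le_refl 0) hu0t.2, him u t hu0t.1 (le_refl t),
      heq u hu0t, heq t ⟨ht.le, le_refl t⟩]
  have h := master t ht ψ hψ hψ0 s hs
  rw [him s t hs.1 (le_refl t), heq s hs, heq t ⟨ht.le, le_refl t⟩] at h
  rw [image_congr hMeqn, hMeqn s ⟨le_refl s, hs.2⟩] at h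
  exact h
end

section
/- Fix $t > 0$ and let $\mathcal{P}(\phi)(s) = 2\max_{0\le u\le s}\phi_u - \phi_s$ denote Pitman's transformation restricted to $[0,t]$. Then for every continuous $\phi : [0,t]\to\mathbb{R}$ and every $s \in [0,t]$, $\phi_s = -\mathcal{P}(\phi)(s) + \min\{2\min_{s\le u\le t}\mathcal{P}(\phi)(u),\; \mathcal{P}(\phi)(t) + \phi_t\}$. -/
theorem stmt9 (t : ℝ) (ht : 0 < t) (φ : ℝ → ℝ)
    (hφ : ContinuousOn φ (Set.Icc 0 t)) :
    ∀ s ∈ Set.Icc (0:ℝ) t,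
      φ s = -(P φ s) + min (2 * sInf ((P φ) '' Set.Icc s t)) (P φ t + φ t) := by
  intro s hs
  obtain ⟨hs0, hst⟩ := hs
  set M : ℝ → ℝ := fun u => sSup (φ '' Set.Icc 0 u) with hM
  have hcomp : IsCompact (φ '' Set.Icc 0 t) := isCompact_Icc.image_of_continuousOn hφ
  have hbdd : BddAbove (φ '' Set.Icc 0 t) := hcomp.bddAbove
  have hbddu : ∀ u, u ≤ t → BddAbove (φ '' Set.Icc 0 u) := fun u hu =>
    hbdd.mono (Set.image_mono (Set.Icc_subset_Icc le_rfl hu))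
  have hne : ∀ u : ℝ, 0 ≤ u → (φ '' Set.Icc 0 u).Nonempty :=
    fun u hu => (Set.nonempty_Icc.2 hu).image _
  have hle : ∀ u, 0 ≤ u → u ≤ t → φ u ≤ M u := fun u h0 h1 =>
    le_csSup (hbddu u h1) ⟨u, ⟨h0, le_rfl⟩, rfl⟩
  have hmono : ∀ u v, 0 ≤ u → u ≤ v → v ≤ t → M u ≤ M v := fun u v h0 huv hvt =>
    csSup_le_csSup (hbddu v hvt) (hne u h0)
      (Set.image_mono (Set.Icc_subset_Icc le_rfl huv))
  have hPb : ∀ u ∈ Set.Icc s t, M s ≤ P φ u := by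
    intro u hu
    have h0u : 0 ≤ u := le_trans hs0 hu.1
    have h1 : φ u ≤ M u := hle u h0u hu.2
    have h2 : M s ≤ M u := hmono s u hs0 hu.1 hu.2
    simp only [P, hM] at *
    linarith
  have hneP : ((P φ) '' Set.Icc s t).Nonempty := (Set.nonempty_Icc.2 hst).image _
  have hbddP : BddBelow ((P φ) '' Set.Icc s t) := by
    refine ⟨M s, ?_⟩
    rintro x ⟨u, hu, rfl⟩
    exact hPb u hu
  have hIlb : M s ≤ sInf ((P φ) '' Set.Icc s t) :=
    le_csInf hneP (by rintro x ⟨u, hu, rfl⟩; exact hPb u hu)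
  have hMst : M s ≤ M t := hmono s t hs0 hst le_rfl
  have hPt : P φ t + φ t = 2 * M t := by simp only [P, hM]; ring
  have key : min (2 * sInf ((P φ) '' Set.Icc s t)) (P φ t + φ t) = 2 * M s := by
    rcases le_or_gt (M t) (M s) with h | h
    · have heq : M t = M s := le_antisymm h hMst
      rw [hPt, heq]
      exact min_eq_right (by linarith)
    · -- M s < M t : find u₁ with P φ u₁ = M s
      have hex : ∃ u ∈ Set.Icc s t, P φ u = M s := by
        rcases eq_or_lt_of_le (hle s hs0 hst) with heq | hlt
        · refine ⟨s, ⟨le_rfl, hst⟩, ?_⟩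
          have hPdef : P φ s = 2 * M s - φ s := rfl
          rw [hPdef, ← heq]; ring
        · -- max attained
          obtain ⟨v, hv, hvmax⟩ :=
            isCompact_Icc.exists_isMaxOn (Set.nonempty_Icc.2 (le_of_lt ht)) hφ
          have hG : IsGreatest (φ '' Set.Icc 0 t) (φ v) := by
            constructor
            · exact ⟨v, hv, rfl⟩
            · rintro x ⟨y, hy, rfl⟩; exact hvmax hy
          have hφv : φ v = M t := hG.csSup_eq.symm
          have hsv : s ≤ v := by
            by_contra hvs
            push_neg at hvs
            have : φ v ≤ M s := le_csSup (hbddu s hst) ⟨v, ⟨hv.1, le_of_lt hvs⟩, rfl⟩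
            linarith [hφv ▸ this]
          have hIcc : Set.Icc s v ⊆ Set.Icc 0 t := Set.Icc_subset_Icc hs0 hv.2
          have hIVT := intermediate_value_Icc hsv (hφ.mono hIcc)
          obtain ⟨w, hw, hφw⟩ : M s ∈ φ '' Set.Icc s v :=
            hIVT ⟨le_of_lt hlt, by rw [hφv]; exact le_of_lt h⟩
          -- S and its infimum
          set S : Set ℝ := Set.Icc s w ∩ φ ⁻¹' {M s} with hS
          have hScl : IsClosed S :=
            (hφ.mono (Set.Icc_subset_Icc hs0 (le_trans hw.2 hv.2))).preimage_isClosed_of_isClosed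
              isClosed_Icc isClosed_singleton
          have hSne : S.Nonempty := ⟨w, ⟨hw.1, le_rfl⟩, hφw⟩
          have hSbd : BddBelow S := ⟨s, fun x hx => hx.1.1⟩
          have hu₁ := hScl.csInf_mem hSne hSbd
          set u₁ := sInf S with hu₁def
          obtain ⟨⟨hsu₁, hu₁w⟩, hφu₁⟩ := hu₁
          have hφu₁' : φ u₁ = M s := hφu₁
          have hu₁t : u₁ ≤ t := le_trans hu₁w (le_trans hw.2 hv.2)
          have h0u₁ : 0 ≤ u₁ := le_trans hs0 hsu₁
          -- φ ≤ M s on [0, u₁]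
          have hub : ∀ x ∈ Set.Icc (0:ℝ) u₁, φ x ≤ M s := by
            intro x hx
            rcases le_or_gt x s with hxs | hsx
            · exact le_csSup (hbddu s hst) ⟨x, ⟨hx.1, hxs⟩, rfl⟩
            · by_contra hgt
              push_neg at hgt
              have hxu₁ : x < u₁ := lt_of_le_of_ne hx.2 (by
                intro hxeq
                rw [hxeq, hφu₁'] at hgt
                exact lt_irrefl _ hgt)
              have hIVT2 := intermediate_value_Icc (le_of_lt hsx)
                (hφ.mono (Set.Icc_subset_Icc hs0 (le_trans hx.2 hu₁t)))
              obtain ⟨y, hy, hφy⟩ : M s ∈ φ '' Set.Icc s x :=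
                hIVT2 ⟨le_of_lt hlt, le_of_lt hgt⟩
              have hyS : y ∈ S := ⟨⟨hy.1, le_trans hy.2 (le_trans hx.2 hu₁w)⟩, hφy⟩
              have : u₁ ≤ y := csInf_le hSbd hyS
              linarith [hy.2]
          have hMu₁ : M u₁ = M s := by
            apply le_antisymm
            · exact csSup_le ((Set.nonempty_Icc.2 h0u₁).image _)
                (by rintro x ⟨y, hy, rfl⟩; exact hub y hy)
            · calc M s = φ u₁ := hφu₁'.symm
                _ ≤ M u₁ := hle u₁ h0u₁ hu₁t
          refine ⟨u₁, ⟨hsu₁, hu₁t⟩, ?_⟩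
          have hPdef : P φ u₁ = 2 * M u₁ - φ u₁ := rfl
          rw [hPdef, hMu₁, hφu₁']
          ring
      obtain ⟨u₁, hu₁, hPu₁⟩ := hex
      have hIle : sInf ((P φ) '' Set.Icc s t) ≤ M s := by
        have := csInf_le hbddP ⟨u₁, hu₁, rfl⟩
        linarith [hPu₁ ▸ this]
      have hIeq : sInf ((P φ) '' Set.Icc s t) = M s := le_antisymm hIle hIlb
      rw [hPt, hIeq]
      exact min_eq_left (by linarith)
  rw [key]
  simp only [P, hM]
  ring
end

section
/- Fix $t > 0$. For every continuous $\phi : [0,t]\to\mathbb{R}$ and every $s \in [0,t]$, the path $\mathcal{M}(\phi)$ satisfies $\mathcal{M}(\phi)(s) = -\mathcal{P}(\phi)(s) + \min\{2\min_{s\le u\le t}\mathcal{P}(\phi)(u),\; \mathcal{P}(\phi)(t) - \phi_t\}$, where $\mathcal{P}$ is Pitman's transformation. -/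
theorem stmt10 (t : ℝ) (ht : 0 < t) (φ : ℝ → ℝ)
    (hφ : ContinuousOn φ (Set.Icc 0 t)) :
    ∀ s ∈ Set.Icc (0:ℝ) t,
      M t φ s = -(P φ s) + min (2 * sInf ((P φ) '' Set.Icc s t)) (P φ t - φ t) := by
  intro s hs
  obtain ⟨hs0, hst⟩ := hs
  set a := sSup (φ '' Set.Icc 0 s) with ha
  set b := sSup (φ '' Set.Icc s t) with hb
  have hsub1 : Set.Icc (0:ℝ) s ⊆ Set.Icc 0 t := Set.Icc_subset_Icc le_rfl hst
  have hsub2 : Set.Icc s t ⊆ Set.Icc 0 t := Set.Icc_subset_Icc hs0 le_rfl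
  have hc1 : IsCompact (φ '' Set.Icc 0 s) :=
    isCompact_Icc.image_of_continuousOn (hφ.mono hsub1)
  have hc2 : IsCompact (φ '' Set.Icc s t) :=
    isCompact_Icc.image_of_continuousOn (hφ.mono hsub2)
  have hne1 : (φ '' Set.Icc 0 s).Nonempty :=
    ⟨φ s, Set.mem_image_of_mem _ (Set.right_mem_Icc.2 hs0)⟩
  have hne2 : (φ '' Set.Icc s t).Nonempty :=
    ⟨φ s, Set.mem_image_of_mem _ (Set.left_mem_Icc.2 hst)⟩
  have hbdd1 : BddAbove (φ '' Set.Icc 0 s) := hc1.bddAbove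
  have hbdd2 : BddAbove (φ '' Set.Icc s t) := hc2.bddAbove
  have hle_a : ∀ v ∈ Set.Icc (0:ℝ) s, φ v ≤ a := fun v hv =>
    le_csSup hbdd1 (Set.mem_image_of_mem _ hv)
  have hle_b : ∀ v ∈ Set.Icc s t, φ v ≤ b := fun v hv =>
    le_csSup hbdd2 (Set.mem_image_of_mem _ hv)
  -- boundedness for intermediate sups
  have hcu : ∀ u ∈ Set.Icc s t, BddAbove (φ '' Set.Icc 0 u) := by
    intro u hu
    exact (isCompact_Icc.image_of_continuousOn
      (hφ.mono (Set.Icc_subset_Icc le_rfl hu.2))).bddAbove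
  -- lower bound for P on [s,t]
  have hPge : ∀ u ∈ Set.Icc s t, max a (2 * a - b) ≤ P φ u := by
    intro u hu
    have h0u : (0:ℝ) ≤ u := hs0.trans hu.1
    have hSu_a : a ≤ sSup (φ '' Set.Icc 0 u) :=
      csSup_le_csSup (hcu u hu) hne1 (Set.image_mono  (Set.Icc_subset_Icc le_rfl hu.1))
    have hSu_φ : φ u ≤ sSup (φ '' Set.Icc 0 u) :=
      le_csSup (hcu u hu) (Set.mem_image_of_mem _ (Set.right_mem_Icc.2 h0u))
    have hφub : φ u ≤ b := hle_b u hu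
    have h1 : a ≤ P φ u := by simp only [P]; linarith
    have h2 : 2 * a - b ≤ P φ u := by simp only [P]; linarith
    exact max_le h1 h2
  -- argmax of φ on [s,t]
  obtain ⟨u₀, hu₀mem, hu₀max⟩ :=
    isCompact_Icc.exists_isMaxOn ⟨s, Set.left_mem_Icc.2 hst⟩ (hφ.mono hsub2)
  have hbu₀ : b = φ u₀ := by
    refine IsGreatest.csSup_eq ⟨Set.mem_image_of_mem _ hu₀mem, ?_⟩
    rintro _ ⟨v, hv, rfl⟩
    exact hu₀max hv
  -- existence of a point where P ≤ max a (2a - b)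
  have hwit : ∃ u ∈ Set.Icc s t, P φ u ≤ max a (2 * a - b) := by
    by_cases hab : b ≤ a
    · refine ⟨u₀, hu₀mem, ?_⟩
      have hSle : sSup (φ '' Set.Icc 0 u₀) ≤ a := by
        refine csSup_le (hne1.mono (Set.image_mono 
          (Set.Icc_subset_Icc le_rfl hu₀mem.1))) ?_
        rintro _ ⟨v, hv, rfl⟩
        rcases le_total v s with h | h
        · exact hle_a v ⟨hv.1, h⟩
        · exact (hle_b v ⟨h, hv.2.trans hu₀mem.2⟩).trans hab
      have : P φ u₀ ≤ 2 * a - b := by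
        simp only [P]; rw [hbu₀]; linarith
      exact this.trans (le_max_right _ _)
    · push_neg at hab
      have hφs : φ s ≤ a := hle_a s ⟨hs0, le_rfl⟩
      -- the set of times in [s,t] where φ equals a
      set S : Set ℝ := {v ∈ Set.Icc s t | φ v = a} with hS
      have hSne : S.Nonempty := by
        have hivt := intermediate_value_Icc hu₀mem.1
          (hφ.mono (Set.Icc_subset_Icc hs0 hu₀mem.2))
        have haIcc : a ∈ Set.Icc (φ s) (φ u₀) := ⟨hφs, by rw [← hbu₀]; exact hab.le⟩
        obtain ⟨v, hv, hva⟩ := hivt haIcc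
        exact ⟨v, ⟨⟨hv.1, hv.2.trans hu₀mem.2⟩, hva⟩⟩
      have hScpt : IsCompact S := by
        have : S = Subtype.val ''
            {x : Set.Icc (0:ℝ) t | x.1 ∈ Set.Icc s t ∧ φ x.1 = a} := by
          ext v
          constructor
          · rintro ⟨hv1, hv2⟩
            exact ⟨⟨v, hsub2 hv1⟩, ⟨hv1, hv2⟩, rfl⟩
          · rintro ⟨x, ⟨hx1, hx2⟩, rfl⟩
            exact ⟨hx1, hx2⟩
        rw [this]
        haveI : CompactSpace (Set.Icc (0:ℝ) t) := isCompact_iff_compactSpace.mp isCompact_Icc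
        have hclosed : IsClosed
            {x : Set.Icc (0:ℝ) t | x.1 ∈ Set.Icc s t ∧ φ x.1 = a} := by
          have hcont : Continuous fun x : Set.Icc (0:ℝ) t => φ x.1 :=
            hφ.restrict
          exact (isClosed_Icc.preimage continuous_subtype_val).inter
            (isClosed_eq hcont continuous_const)
        exact (hclosed.isCompact).image continuous_subtype_val
      have huS : sInf S ∈ S := hScpt.sInf_mem hSne
      set u := sInf S with hu
      obtain ⟨humem, huφ⟩ := huS
      refine ⟨u, humem, ?_⟩
      -- on [0,u], φ ≤ a : below s by def of a; in [s,u) by IVT minimality; at u it is a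
      have hSle : sSup (φ '' Set.Icc 0 u) ≤ a := by
        refine csSup_le (hne1.mono (Set.image_mono 
          (Set.Icc_subset_Icc le_rfl humem.1))) ?_
        rintro _ ⟨v, hv, rfl⟩
        rcases le_total v s with h | h
        · exact hle_a v ⟨hv.1, h⟩
        · rcases eq_or_lt_of_le hv.2 with h2 | h2
          · rw [h2, huφ]
          · by_contra hgt
            push_neg at hgt
            have hivt := intermediate_value_Icc h
              (hφ.mono (Set.Icc_subset_Icc hs0 ((hv.2.trans humem.2))))
            obtain ⟨w, hw, hwa⟩ := hivt ⟨hφs, hgt.le⟩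
            have : u ≤ w := csInf_le hScpt.bddBelow
              ⟨⟨hw.1, (hw.2.trans hv.2).trans humem.2⟩, hwa⟩
            exact absurd (this.trans hw.2) (not_le.2 h2)
      have : P φ u ≤ a := by
        simp only [P]; rw [huφ]; linarith
      exact this.trans (le_max_left _ _)
  -- the value of the infimum
  have hinf : sInf (P φ '' Set.Icc s t) = max a (2 * a - b) := by
    obtain ⟨u, humem, hu⟩ := hwit
    refine le_antisymm ?_ ?_
    · exact (csInf_le ⟨max a (2 * a - b), by
        rintro _ ⟨v, hv, rfl⟩; exact hPge v hv⟩
        (Set.mem_image_of_mem _ humem)).trans hu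
    · refine le_csInf ⟨P φ s, Set.mem_image_of_mem _ (Set.left_mem_Icc.2 hst)⟩ ?_
      rintro _ ⟨v, hv, rfl⟩; exact hPge v hv
  -- sup over [0,t] splits as max
  have hsplit : sSup (φ '' Set.Icc 0 t) = max a b := by
    have h1 : φ '' Set.Icc 0 t = (φ '' Set.Icc 0 s) ∪ (φ '' Set.Icc s t) := by
      rw [← Set.image_union, Set.Icc_union_Icc_eq_Icc hs0 hst]
    rw [h1, csSup_union hbdd1 hne1 hbdd2 hne2]
  -- final algebra
  have hPs : P φ s = 2 * a - φ s := by simp only [P]; rfl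
  have hPt : P φ t = 2 * max a b - φ t := by simp only [P]; rw [hsplit]
  rw [hinf, hPs, hPt]
  simp only [M]
  rcases abs_cases (φ t + a - b) with ⟨h1, h1'⟩ | ⟨h1, h1'⟩ <;>
    rcases abs_cases (a - b) with ⟨h2, h2'⟩ | ⟨h2, h2'⟩ <;>
      rw [h1, h2] <;> simp only [max_def, min_def] <;>
        split_ifs <;> linarith
end
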